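/- Let m ≥ 3 and let δ_1,...,δ_m ∈ Z^2 sum to zero. Then (1/(2^{m−2}(m−1)!))·Σ_{σ ∈ S_{m−1}} Π_{j=1}^{m−2} [δ_{σ(j+1)} ∧ Σ_{l=1}^{j} δ_{σ(l)}]_+ = (1/(m−1)!)·μ_m(δ_1,...,δ_m), where [c]_+ = q^{c/2} + q^{−c/2} and μ_m(δ_1,...,δ_m) = Σ_{ω cyclic order} q^{k(ω)/2}. -/

import Mathlib

/-! In the expansion of the product, choosing `q^{c_j/2}` or `q^{-c_j/2}` in the factor `[c_j]_+`
amounts to putting `δ_{σ(j+1)}` in front of or behind the arrangement of `δ_{σ(1)}, …, δ_{σ(j)}`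
built so far: as `c_j` is `δ_{σ(j+1)}` wedged with the sum of those vectors, this adds `±c_j` to
the pair wedge `Σ_{i<j} v_i ∧ v_j` of the arrangement. A fixed pattern of choices rearranges every
`σ` by the same permutation, so the sum over `σ` is `2^{m-2}` times the sum of `q^{K/2}` over all
orderings of `δ_1, …, δ_{m-1}`, `K` being their pair wedge. Since `Σ δ_i = 0`, the pair wedge of a
sequence does not change when its first term is dropped instead of its last, so `K` is also `k(ω)`
for the cyclic order `ω` that puts `δ_m` after that ordering. -/

/-- The wedge product of two integer vectors in ℤ²: the determinant of the
matrix with columns `v` and `w`. -/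
def wedge (v w : ℤ × ℤ) : ℤ := v.1 * w.2 - v.2 * w.1

open LaurentPolynomial

/-- `k(ω)` for a linear representative `σ` of a cyclic order:
`k(σ) = Σ_{2 ≤ i < j ≤ m} δ_{σ(i)} ∧ δ_{σ(j)}` (zero-indexed: `1 ≤ i < j`). -/
def kcyc {N : ℕ} (a : Fin N → ℤ × ℤ) (σ : Equiv.Perm (Fin N)) : ℤ :=
  ∑ p ∈ Finset.univ.filter (fun p : Fin N × Fin N => 1 ≤ (p.1 : ℕ) ∧ p.1 < p.2),
    wedge (a (σ p.1)) (a (σ p.2))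

/-- `μ_m(δ_1,…,δ_m) = Σ_{ω ∈ Ω_m} q^{k(ω)/2}`, cyclic orders encoded by their unique
linear representatives fixing the last position; `T c` stands for `q^{c/2}`. -/
noncomputable def mu {n : ℕ} (a : Fin (n + 1) → ℤ × ℤ) : LaurentPolynomial ℚ :=
  ∑ σ ∈ Finset.univ.filter
      (fun σ : Equiv.Perm (Fin (n + 1)) => σ (Fin.last n) = Fin.last n),
    T (kcyc a σ)

/-- For `σ ∈ S_{m-1}` (acting on the indices `1,…,m-1`, zero-indexed `Fin (n+2)` inside
`Fin (n+3)` via `castSucc`, with `m = n+3`) and `1 ≤ j ≤ m-2` (zero-indexed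
`j : Fin (n+1)`), the wedge `δ_{σ(j+1)} ∧ Σ_{l=1}^{j} δ_{σ(l)}`. -/
def cterm {n : ℕ} (δ : Fin (n + 3) → ℤ × ℤ) (σ : Equiv.Perm (Fin (n + 2)))
    (j : Fin (n + 1)) : ℤ :=
  wedge (δ (Fin.castSucc (σ j.succ)))
    (∑ l ∈ Finset.univ.filter (fun l : Fin (n + 2) => (l : ℕ) < (j : ℕ) + 1),
      δ (Fin.castSucc (σ l)))


open Finset Equiv

lemma wedge_sum_right {ι : Type*} (v : ℤ × ℤ) (s : Finset ι) (f : ι → ℤ × ℤ) :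
    wedge v (∑ i ∈ s, f i) = ∑ i ∈ s, wedge v (f i) := by
  simp [wedge, Prod.fst_sum, Prod.snd_sum, mul_sum]

lemma wedge_sum_left {ι : Type*} (s : Finset ι) (f : ι → ℤ × ℤ) (v : ℤ × ℤ) :
    wedge (∑ i ∈ s, f i) v = ∑ i ∈ s, wedge (f i) v := by
  simp [wedge, Prod.fst_sum, Prod.snd_sum, sum_mul]

lemma wedge_swap (v w : ℤ × ℤ) : wedge w v = -wedge v w := by
  simp only [wedge]; ring

def pairWedge {N : ℕ} (x : Fin N → ℤ × ℤ) : ℤ :=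
  ∑ p ∈ univ.filter (fun p : Fin N × Fin N => p.1 < p.2), wedge (x p.1) (x p.2)

lemma pairWedge_cons {N : ℕ} (a : ℤ × ℤ) (x : Fin N → ℤ × ℤ) :
    pairWedge (Fin.cons a x : Fin (N + 1) → ℤ × ℤ) = wedge a (∑ i, x i) + pairWedge x := by
  simp [pairWedge, sum_filter, Fintype.sum_prod_type, Fin.sum_univ_succ, wedge_sum_right]

lemma pairWedge_snoc {N : ℕ} (x : Fin N → ℤ × ℤ) (a : ℤ × ℤ) :
    pairWedge (Fin.snoc x a : Fin (N + 1) → ℤ × ℤ) = pairWedge x + wedge (∑ i, x i) a := by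
  simp [pairWedge, sum_filter, Fintype.sum_prod_type, Fin.sum_univ_castSucc, wedge_sum_left,
    sum_add_distrib, (Fin.castSucc_lt_last _).not_gt]

lemma kcyc_eq_pairWedge_tail {N : ℕ} (a : Fin (N + 1) → ℤ × ℤ) (σ : Perm (Fin (N + 1))) :
    kcyc a σ = pairWedge (Fin.tail (a ∘ σ)) := by
  simp [kcyc, pairWedge, sum_filter, Fintype.sum_prod_type, Fin.sum_univ_succ, Fin.tail]

lemma pairWedge_tail_eq_init {N : ℕ} (b : Fin (N + 2) → ℤ × ℤ) (hb : ∑ i, b i = 0) :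
    pairWedge (Fin.tail b) = pairWedge (Fin.init b) := by
  have htail : Fin.tail b = Fin.snoc (Fin.init (Fin.tail b)) (b (Fin.last _)) :=
    (Fin.snoc_init_self _).symm
  have hinit : Fin.init b = Fin.cons (b 0) (Fin.init (Fin.tail b)) := by
    rw [← Fin.tail_init_eq_init_tail]; exact (Fin.cons_self_tail _).symm
  have hmid : ∑ i, Fin.init (Fin.tail b) i = -b 0 - b (Fin.last _) := by
    rw [Fin.sum_univ_succ, Fin.sum_univ_castSucc] at hb
    rw [← sub_eq_zero, ← hb]
    simp only [Fin.init, Fin.tail]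
    abel
  rw [htail, hinit, pairWedge_snoc, pairWedge_cons, hmid]
  simp only [wedge, Prod.fst_sub, Prod.snd_sub, Prod.fst_neg, Prod.snd_neg]
  ring

namespace Equiv.Perm

def extendLast {N : ℕ} (τ : Perm (Fin (N + 1))) : Perm (Fin (N + 2)) :=
  (permCongr finSuccEquivLast).symm (decomposeOption.symm (none, τ))

@[simp]
lemma extendLast_castSucc {N : ℕ} (τ : Perm (Fin (N + 1))) (i : Fin (N + 1)) :
    extendLast τ i.castSucc = (τ i).castSucc := by
  simp [extendLast, permCongr_apply]

@[simp]
lemma extendLast_last {N : ℕ} (τ : Perm (Fin (N + 1))) :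
    extendLast τ (Fin.last _) = Fin.last _ := by
  simp [extendLast, permCongr_apply]

lemma sum_filter_apply_last_eq_last {N : ℕ} {M : Type*} [AddCommMonoid M]
    (f : Perm (Fin (N + 2)) → M) :
    ∑ σ ∈ univ.filter (fun σ : Perm (Fin (N + 2)) => σ (Fin.last _) = Fin.last _), f σ
      = ∑ τ : Perm (Fin (N + 1)), f (extendLast τ) := by
  let e := (permCongr finSuccEquivLast).trans (decomposeOption (α := Fin (N + 1)))
  have he : ∀ σ : Perm (Fin (N + 2)), σ (Fin.last _) = Fin.last _ → e σ = (none, (e σ).2) := by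
    intro σ hσ
    simp [e, permCongr_apply, hσ]
  symm
  refine sum_nbij' extendLast (fun σ => (e σ).2) (by simp) (by simp) (fun τ _ => ?_)
    (fun σ hσ => ?_) (fun _ _ => rfl)
  · exact congrArg Prod.snd (e.apply_symm_apply (none, τ))
  · conv_rhs => rw [← e.symm_apply_apply σ, he σ (by simpa using hσ)]
    rfl

end Equiv.Perm

lemma mu_eq_sum_pairWedge {N : ℕ} (a : Fin (N + 2) → ℤ × ℤ) (ha : ∑ i, a i = 0) :
    mu a = ∑ τ : Perm (Fin (N + 1)), T (pairWedge ((a ∘ Fin.castSucc) ∘ τ)) := by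
  rw [mu, Perm.sum_filter_apply_last_eq_last]
  refine sum_congr rfl fun τ _ => ?_
  have hsum : ∑ i, (a ∘ Perm.extendLast τ) i = 0 := by
    rw [← ha]; exact Equiv.sum_comp _ a
  rw [kcyc_eq_pairWedge_tail, pairWedge_tail_eq_init _ hsum]
  congr 2
  funext i
  simp [Fin.init]

/-- `x 0` comes first, then each `x (j + 1)` is put in front if `s j` and at the back otherwise. -/
def insertFrontBack {α : Type*} : {k : ℕ} → (Fin k → Bool) → (Fin (k + 1) → α) → Fin (k + 1) → α
  | 0, _, x => x
  | _ + 1, s, x =>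
    if s (Fin.last _) then Fin.cons (x (Fin.last _)) (insertFrontBack (Fin.init s) (Fin.init x))
    else Fin.snoc (insertFrontBack (Fin.init s) (Fin.init x)) (x (Fin.last _))

section insertFrontBack
variable {α β : Type*} {k : ℕ}

@[simp]
lemma insertFrontBack_snoc (s : Fin k → Bool) (b : Bool) (x : Fin (k + 1) → α) (a : α) :
    insertFrontBack (Fin.snoc s b : Fin (k + 1) → Bool) (Fin.snoc x a : Fin (k + 2) → α)
      = if b then Fin.cons a (insertFrontBack s x) else Fin.snoc (insertFrontBack s x) a := by
  simp [insertFrontBack]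

lemma comp_insertFrontBack (g : α → β) (s : Fin k → Bool) (x : Fin (k + 1) → α) :
    g ∘ insertFrontBack s x = insertFrontBack s (g ∘ x) := by
  induction k with
  | zero => rfl
  | succ k ih =>
    simp only [insertFrontBack, apply_ite (g ∘ ·), Fin.comp_cons, Fin.comp_snoc, ih,
      Fin.comp_init]
    rfl

lemma range_insertFrontBack (s : Fin k → Bool) (x : Fin (k + 1) → α) :
    Set.range (insertFrontBack s x) = Set.range x := by
  induction k with
  | zero => rfl
  | succ k ih =>
    conv_rhs => rw [← Fin.snoc_init_self x, Fin.range_snoc]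
    unfold insertFrontBack
    split_ifs <;> simp [Fin.range_cons, Fin.range_snoc, ih]

lemma bijective_insertFrontBack_id (s : Fin k → Bool) :
    Function.Bijective (insertFrontBack s id) :=
  Finite.surjective_iff_bijective.mp <| Set.range_eq_univ.mp <|
    (range_insertFrontBack s id).trans Set.range_id

noncomputable def insertFrontBackPerm (s : Fin k → Bool) : Perm (Fin (k + 1)) :=
  Equiv.ofBijective _ (bijective_insertFrontBack_id s)

lemma insertFrontBack_eq_comp (s : Fin k → Bool) (x : Fin (k + 1) → α) :
    insertFrontBack s x = x ∘ insertFrontBackPerm s :=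
  (comp_insertFrontBack x s id).symm

lemma sum_insertFrontBack {M : Type*} [AddCommMonoid M] (s : Fin k → Bool)
    (x : Fin (k + 1) → M) :
    ∑ i, insertFrontBack s x i = ∑ i, x i := by
  rw [insertFrontBack_eq_comp]
  exact Equiv.sum_comp _ x

end insertFrontBack

lemma sum_fun_bool_snoc {M : Type*} [AddCommMonoid M] {k : ℕ} (F : (Fin (k + 1) → Bool) → M) :
    ∑ s, F s = ∑ s : Fin k → Bool, (F (Fin.snoc s true) + F (Fin.snoc s false)) := by
  rw [← (Fin.snocEquiv fun _ => Bool).sum_comp, Fintype.sum_prod_type, Fintype.sum_bool,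
    ← sum_add_distrib]
  rfl

def prefixWedge {k : ℕ} (x : Fin (k + 1) → ℤ × ℤ) (j : Fin k) : ℤ :=
  wedge (x j.succ) (∑ l ∈ univ.filter (fun l : Fin (k + 1) => (l : ℕ) < (j : ℕ) + 1), x l)

section prefixWedge
variable {k : ℕ}

@[simp]
lemma prefixWedge_snoc_castSucc (x : Fin (k + 1) → ℤ × ℤ) (a : ℤ × ℤ) (j : Fin k) :
    prefixWedge (Fin.snoc x a : Fin (k + 2) → ℤ × ℤ) j.castSucc = prefixWedge x j := by
  have hj : ¬ k < (j : ℕ) := by omega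
  rw [prefixWedge, prefixWedge, Fin.succ_castSucc, Fin.snoc_castSucc, sum_filter, sum_filter,
    Fin.sum_univ_castSucc]
  simp [hj]

@[simp]
lemma prefixWedge_snoc_last (x : Fin (k + 1) → ℤ × ℤ) (a : ℤ × ℤ) :
    prefixWedge (Fin.snoc x a : Fin (k + 2) → ℤ × ℤ) (Fin.last k) = wedge a (∑ i, x i) := by
  simp [prefixWedge, sum_filter, Fin.sum_univ_castSucc]

lemma prod_T_add_T_neg_prefixWedge (x : Fin (k + 1) → ℤ × ℤ) :
    ∏ j, (T (prefixWedge x j) + T (-prefixWedge x j) : LaurentPolynomial ℚ)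
      = ∑ s : Fin k → Bool, T (pairWedge (insertFrontBack s x)) := by
  induction k with
  | zero => simp [pairWedge, sum_filter, Fintype.sum_prod_type]
  | succ k ih =>
    obtain ⟨y, a, rfl⟩ : ∃ y a, x = Fin.snoc y a :=
      ⟨Fin.init x, x (Fin.last _), (Fin.snoc_init_self x).symm⟩
    rw [Fin.prod_univ_castSucc, sum_fun_bool_snoc]
    simp only [prefixWedge_snoc_castSucc, prefixWedge_snoc_last, ih, sum_mul,
      insertFrontBack_snoc, if_true, Bool.false_eq_true, if_false]
    refine sum_congr rfl fun s _ => ?_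
    rw [pairWedge_cons, pairWedge_snoc, sum_insertFrontBack, mul_add, ← T_add, ← T_add,
      wedge_swap]
    ring_nf

end prefixWedge

lemma sum_perm_prod_T_add_T_neg_prefixWedge {k : ℕ} (x : Fin (k + 1) → ℤ × ℤ) :
    ∑ σ : Perm (Fin (k + 1)),
        ∏ j, (T (prefixWedge (x ∘ σ) j) + T (-prefixWedge (x ∘ σ) j) : LaurentPolynomial ℚ)
      = 2 ^ k • ∑ σ : Perm (Fin (k + 1)), T (pairWedge (x ∘ σ)) := by
  simp only [prod_T_add_T_neg_prefixWedge, insertFrontBack_eq_comp]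
  rw [sum_comm]
  have hs : ∀ s : Fin k → Bool, ∑ σ : Perm (Fin (k + 1)),
      (T (pairWedge (x ∘ σ ∘ insertFrontBackPerm s)) : LaurentPolynomial ℚ)
        = ∑ σ : Perm (Fin (k + 1)), T (pairWedge (x ∘ σ)) := fun s =>
    Equiv.sum_comp (Equiv.mulRight (insertFrontBackPerm s)) fun σ => T (pairWedge (x ∘ σ))
  simp only [Function.comp_assoc, hs, sum_const, card_univ, Fintype.card_fun, Fintype.card_bool,
    Fintype.card_fin]

/-- for `m = n + 3 ≥ 3` and `δ_1,…,δ_m ∈ ℤ²` summing to zero,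
`(1/(2^{m-2}(m-1)!)) Σ_{σ ∈ S_{m-1}} Π_{j=1}^{m-2} [δ_{σ(j+1)} ∧ Σ_{l≤j} δ_{σ(l)}]_+
 = (1/(m-1)!) μ_m(δ_1,…,δ_m)`, where `[c]_+ = q^{c/2} + q^{-c/2}` in `ℚ[q^{±1/2}]`. -/
theorem stmt9 (n : ℕ) (δ : Fin (n + 3) → ℤ × ℤ) (hδ : ∑ i, δ i = 0) :
    ((2 ^ (n + 1) * (Nat.factorial (n + 2) : ℚ))⁻¹) •
        ∑ σ : Equiv.Perm (Fin (n + 2)),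
          ∏ j : Fin (n + 1),
            ((T (cterm δ σ j) + T (-(cterm δ σ j))) : LaurentPolynomial ℚ)
      = ((Nat.factorial (n + 2) : ℚ)⁻¹) • mu δ := by
  have key : ∑ σ : Perm (Fin (n + 2)),
      ∏ j, (T (cterm δ σ j) + T (-cterm δ σ j) : LaurentPolynomial ℚ) = 2 ^ (n + 1) • mu δ := by
    rw [mu_eq_sum_pairWedge δ hδ]
    exact sum_perm_prod_T_add_T_neg_prefixWedge (δ ∘ Fin.castSucc)
  rw [key, ← Nat.cast_smul_eq_nsmul ℚ, smul_smul]
  congr 1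
  push_cast
  field_simp
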